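/- arXiv:2602.18674 — 3 statements merged into one kernel-verified Lean document; each statement's English description precedes it below -/
import Mathlib

section
/- Let C ⊂ ℝ^d be an intersection of finitely many half-spaces, C = ∩_{i=1}^m {z : ⟨v_i, z⟩ + b_i ≤ 0} (with each ‖v_i‖ = 1), let x be an interior point of C with a = min_i |⟨v_i, x⟩ + b_i| > 0, and let r > 0. If ξ is uniform on the sphere of radius r centered at the origin, then P[x + ξ ∉ C] ≤ m · exp(-d·a²/(2r²)). -/
/-!
A union bound over the `m` facets reduces the claim to a single spherical cap
`{ξ ∈ sphere 0 r | a ≤ ⟪v, ξ⟫}`. Central projection from the point `-c • v` onto the sphere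
maps the open hemisphere `{0 < ⟪v, ξ⟫}` onto a set containing the cap (for `c` not too large),
and it is `r / √(r ^ 2 + c ^ 2)`-Lipschitz there. A Lipschitz map multiplies the
`(d - 1)`-dimensional Hausdorff measure by at most the `(d - 1)`-th power of its constant, and
the hemisphere carries at most half the measure of the sphere (it is disjoint from its
antipodal image), so the cap has relative measure at most
`(r ^ 2 / (r ^ 2 + c ^ 2)) ^ ((d - 1) / 2) / 2`. For `c` close enough to its limit
`r a / √(r ^ 2 - a ^ 2)` this is at most `exp (-d a ^ 2 / (2 r ^ 2))`: the limit value is at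
most `exp (-(d - 1) a ^ 2 / (2 r ^ 2)) / 2`, and the `1 / 2` absorbs `exp (a ^ 2 / (2 r ^ 2)) < 2`.
-/

open MeasureTheory Metric Real RealInnerProductSpace ENNReal

/-- The uniform (normalized Hausdorff surface) probability measure on the sphere of
radius `r` centered at `x` in `ℝ^d`. -/
noncomputable def uniformSphereMeasure (d : ℕ) (x : EuclideanSpace ℝ (Fin d)) (r : ℝ) :
    Measure (EuclideanSpace ℝ (Fin d)) :=
  (μH[(d : ℝ) - 1] (sphere x r))⁻¹ • (μH[(d : ℝ) - 1]).restrict (sphere x r)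

theorem exists_exp_neg_le_two_mul_exp_neg {d s : ℝ} (hd : 1 ≤ d) (hs0 : 0 < s) (hs1 : s ≤ 1) :
    ∃ t, 0 ≤ t ∧ exp (2 * t) * (1 - s) < 1 ∧ exp (-(t * (d - 1))) ≤ 2 * exp (-(d * s) / 2) := by
  have hd3 : 0 < 1 / (3 * d) := by positivity
  have hd3' : 1 / (3 * d) ≤ 1 / 3 := by gcongr; linarith
  -- the slack `1 / (3 * d)` keeps `d * s / 2 - t * (d - 1) ≤ 2 / 3 < log 2`
  obtain ⟨t, ht⟩ : ∃ t : ℝ, t = s / 2 * (1 - 1 / (3 * d)) := ⟨_, rfl⟩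
  have hts : 2 * t < s := by rw [ht]; nlinarith
  refine ⟨t, by rw [ht]; nlinarith, ?_, ?_⟩
  · calc exp (2 * t) * (1 - s) < exp (2 * t) * exp (-(2 * t)) := by
          gcongr; linarith [add_one_le_exp (-(2 * t))]
      _ = 1 := by rw [← exp_add, add_neg_cancel, exp_zero]
  · have hexcess : d * s / 2 - t * (d - 1) = s / 2 * (4 / 3 - 1 / (3 * d)) := by
      rw [ht]; field_simp; ring
    calc exp (-(t * (d - 1))) ≤ exp (Real.log 2 + -(d * s) / 2) := by
          gcongr
          nlinarith [Real.log_two_gt_d9,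
            mul_le_mul_of_nonneg_right hs1 (by linarith : (0 : ℝ) ≤ 4 / 3 - 1 / (3 * d))]
      _ = 2 * exp (-(d * s) / 2) := by rw [exp_add, exp_log two_pos]

section

variable {E : Type*} [NormedAddCommGroup E] [InnerProductSpace ℝ E]

theorem norm_inv_norm_smul_sub_inv_norm_smul_le {ρ : ℝ} (hρ : 0 < ρ) {y z : E}
    (hy : ρ ≤ ‖y‖) (hz : ρ ≤ ‖z‖) :
    ‖‖y‖⁻¹ • y - ‖z‖⁻¹ • z‖ ≤ ‖y - z‖ / ρ := by
  have hy0 : 0 < ‖y‖ := hρ.trans_le hy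
  have hz0 : 0 < ‖z‖ := hρ.trans_le hz
  have hyz : ⟪y, z⟫ ≤ ‖y‖ * ‖z‖ := real_inner_le_norm y z
  rw [le_div_iff₀ hρ, ← pow_le_pow_iff_left₀ (by positivity) (norm_nonneg _) two_ne_zero,
    mul_pow, norm_sub_sq_real, norm_sub_sq_real, real_inner_smul_left, real_inner_smul_right,
    norm_smul, norm_smul, norm_inv, norm_norm, norm_inv, norm_norm,
    inv_mul_cancel₀ hy0.ne', inv_mul_cancel₀ hz0.ne']
  have key : 0 ≤ ‖y‖ * ‖z‖ * (‖y‖ - ‖z‖) ^ 2 +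
      2 * (‖y‖ * ‖z‖ - ⟪y, z⟫) * (‖y‖ * ‖z‖ - ρ ^ 2) := by
    have : ρ ^ 2 ≤ ‖y‖ * ‖z‖ := by nlinarith
    have := sub_nonneg.2 this
    have := sub_nonneg.2 hyz
    positivity
  field_simp
  nlinarith [key]

theorem setOf_add_notMem_subset_iUnion {ι : Type*} {v : ι → E} {b : ι → ℝ} {x : E} {a : ℝ}
    (hx : x ∈ {z | ∀ i, ⟪v i, z⟫ + b i ≤ 0}) (ha : ∀ i, a ≤ |⟪v i, x⟫ + b i|) :
    {ξ | x + ξ ∉ {z | ∀ i, ⟪v i, z⟫ + b i ≤ 0}} ⊆ ⋃ i, {ξ | a ≤ ⟪v i, ξ⟫} := by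
  intro ξ hξ
  simp only [Set.mem_ofPred_eq, not_forall, not_le, inner_add_right] at hξ
  obtain ⟨i, hi⟩ := hξ
  have hxi := ha i
  rw [abs_of_nonpos (hx i)] at hxi
  exact Set.mem_iUnion.2 ⟨i, show a ≤ ⟪v i, ξ⟫ by linarith⟩

/-- Central projection from the point `-w` onto the sphere of radius `r` about the origin. -/
noncomputable def centralProj (r : ℝ) (w ξ : E) : E :=
  r • ‖ξ + w‖⁻¹ • (ξ + w)

theorem le_norm_add_of_mem_sphere {r ρ : ℝ} {w ξ : E} (hρw : ρ ^ 2 ≤ r ^ 2 + ‖w‖ ^ 2)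
    (hξ : ξ ∈ sphere 0 r) (hwξ : 0 ≤ ⟪w, ξ⟫) : ρ ≤ ‖ξ + w‖ := by
  rw [mem_sphere_zero_iff_norm] at hξ
  refine abs_le_of_sq_le_sq' ?_ (norm_nonneg _) |>.2
  rw [norm_add_sq_real, hξ, real_inner_comm]
  linarith

theorem lipschitzOnWith_centralProj {r ρ : ℝ} (hr : 0 ≤ r) (hρ : 0 < ρ) {w : E}
    (hρw : ρ ^ 2 ≤ r ^ 2 + ‖w‖ ^ 2) :
    LipschitzOnWith (r / ρ).toNNReal (centralProj r w) (sphere 0 r ∩ {ξ | 0 ≤ ⟪w, ξ⟫}) := by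
  refine LipschitzOnWith.of_dist_le_mul fun ξ hξ η hη => ?_
  have hρξ := le_norm_add_of_mem_sphere hρw hξ.1 hξ.2
  have hρη := le_norm_add_of_mem_sphere hρw hη.1 hη.2
  calc dist (centralProj r w ξ) (centralProj r w η)
      = r * ‖‖ξ + w‖⁻¹ • (ξ + w) - ‖η + w‖⁻¹ • (η + w)‖ := by
        rw [dist_eq_norm, centralProj, centralProj, ← smul_sub, norm_smul, Real.norm_of_nonneg hr]
    _ ≤ r * (‖(ξ + w) - (η + w)‖ / ρ) :=
        mul_le_mul_of_nonneg_left (norm_inv_norm_smul_sub_inv_norm_smul_le hρ hρξ hρη) hr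
    _ = (r / ρ).toNNReal * dist ξ η := by
        rw [Real.coe_toNNReal _ (by positivity), add_sub_add_right_eq_sub, dist_eq_norm]
        ring

theorem sphere_inter_cap_subset_image_centralProj {v : E} (hv : ‖v‖ = 1) {r a c : ℝ}
    (hr : 0 < r) (ha : 0 < a) (hc : 0 ≤ c) (hcap : c ^ 2 * (r ^ 2 - a ^ 2) < r ^ 2 * a ^ 2) :
    sphere 0 r ∩ {η | a ≤ ⟪v, η⟫} ⊆
      centralProj r (c • v) '' (sphere 0 r ∩ {ξ | 0 < ⟪v, ξ⟫}) := by
  rintro η ⟨hη, haη⟩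
  rw [mem_sphere_zero_iff_norm] at hη
  set τ := ⟪v, η⟫
  have hτ0 : 0 < τ := ha.trans_le haη
  have hτr : τ ≤ r := by simpa [hv, hη] using real_inner_le_norm v η
  set f : ℝ → ℝ := fun t => ‖t • η - c • v‖ with hf
  have hf_sq (t : ℝ) : f t ^ 2 = t ^ 2 * r ^ 2 - 2 * t * c * τ + c ^ 2 := by
    simp only [hf, norm_sub_sq_real, norm_smul, real_inner_smul_left, real_inner_smul_right,
      real_inner_comm v η, hv, hη, Real.norm_eq_abs, mul_pow, sq_abs]
    ring
  -- the ray `t ↦ t • η - c • v` crosses `v⟂` inside the ball at `t₀` and is outside it at `t₁`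
  set t₀ := c / τ
  set t₁ := (r + c) / τ
  have hft₀ : f t₀ < r := by
    refine abs_lt_of_sq_lt_sq' ?_ hr.le |>.2
    rw [hf_sq]
    have hτa : a ^ 2 ≤ τ ^ 2 := pow_le_pow_left₀ ha.le haη 2
    have : c ^ 2 * (r ^ 2 - τ ^ 2) < r ^ 2 * τ ^ 2 := by
      nlinarith [mul_le_mul_of_nonneg_left hτa (sq_nonneg c),
        mul_le_mul_of_nonneg_left hτa (sq_nonneg r)]
    simp only [t₀]
    field_simp
    nlinarith
  have hft₁ : r ≤ f t₁ := by
    have h1 : r + c ≤ t₁ * r := by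
      simp only [t₁]; rw [div_mul_eq_mul_div, le_div_iff₀ hτ0]; nlinarith
    have h2 := norm_sub_norm_le (t₁ • η) (c • v)
    simp only [norm_smul, hη, hv, Real.norm_of_nonneg hc,
      Real.norm_of_nonneg (by positivity : 0 ≤ t₁)] at h2
    simp only [hf]; linarith
  have hcont : ContinuousOn f (Set.Icc t₀ t₁) := by fun_prop
  obtain ⟨t, ⟨ht₀, -⟩, hft⟩ :=
    intermediate_value_Icc (by simp only [t₀, t₁]; gcongr; linarith) hcont ⟨hft₀.le, hft₁⟩
  have htt₀ : t₀ < t := ht₀.lt_of_ne (by rintro rfl; exact hft₀.ne hft)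
  have hct : c < t * τ := by rwa [div_lt_iff₀ hτ0] at htt₀
  have ht : 0 < t := (div_nonneg hc hτ0.le).trans_lt htt₀
  refine ⟨t • η - c • v, ⟨mem_sphere_zero_iff_norm.2 hft, ?_⟩, ?_⟩
  · simp only [Set.mem_ofPred_eq, inner_sub_right, real_inner_smul_right,
      real_inner_self_eq_norm_sq, hv]
    linarith
  · rw [centralProj, sub_add_cancel, norm_smul, hη, Real.norm_of_nonneg ht.le, smul_smul, smul_smul]
    field_simp
    simp

theorem two_mul_hausdorffMeasure_hemisphere_le [MeasurableSpace E] [BorelSpace E]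
    (δ : ℝ) (v : E) (r : ℝ) :
    2 * μH[δ] (sphere 0 r ∩ {ξ | 0 < ⟪v, ξ⟫}) ≤ μH[δ] (sphere (0 : E) r) := by
  set H := sphere (0 : E) r ∩ {ξ | 0 < ⟪v, ξ⟫}
  have hneg : μH[δ] (-H) = μH[δ] H := by
    rw [← Set.image_neg_eq_neg]
    exact isometry_neg.hausdorffMeasure_image (Or.inr neg_surjective) H
  have hdisj : Disjoint H (-H) := by
    refine Set.disjoint_left.2 fun ξ hξ hξ' => ?_
    have h₁ : 0 < ⟪v, ξ⟫ := hξ.2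
    have h₂ : 0 < ⟪v, -ξ⟫ := hξ'.2
    rw [inner_neg_right] at h₂
    linarith
  have hmeas : MeasurableSet (-H) :=
    (isClosed_sphere.measurableSet.inter
      (isOpen_lt continuous_const (continuous_const.inner continuous_id)).measurableSet).neg
  calc 2 * μH[δ] H = μH[δ] (H ∪ -H) := by rw [measure_union hdisj hmeas, hneg, two_mul]
    _ ≤ μH[δ] (sphere (0 : E) r) :=
      measure_mono <| Set.union_subset Set.inter_subset_left fun ξ hξ => by simpa using hξ.1

theorem two_mul_hausdorffMeasure_sphere_inter_cap_le [MeasurableSpace E] [BorelSpace E]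
    {δ : ℝ} (hδ : 0 ≤ δ) {v : E} (hv : ‖v‖ = 1) {r a c ρ : ℝ} (hr : 0 < r) (ha : 0 < a)
    (hc : 0 ≤ c) (hρ : 0 < ρ) (hρc : ρ ^ 2 ≤ r ^ 2 + c ^ 2)
    (hcap : c ^ 2 * (r ^ 2 - a ^ 2) < r ^ 2 * a ^ 2) :
    2 * μH[δ] (sphere 0 r ∩ {ξ | a ≤ ⟪v, ξ⟫}) ≤
      ENNReal.ofReal ((r / ρ) ^ δ) * μH[δ] (sphere (0 : E) r) := by
  set H := sphere (0 : E) r ∩ {ξ | 0 < ⟪v, ξ⟫}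
  have hlip : LipschitzOnWith (r / ρ).toNNReal (centralProj r (c • v)) H := by
    refine (lipschitzOnWith_centralProj hr.le hρ ?_).mono fun ξ hξ => ⟨hξ.1, ?_⟩
    · rwa [norm_smul, hv, mul_one, Real.norm_eq_abs, sq_abs]
    · have : 0 < ⟪v, ξ⟫ := hξ.2
      show 0 ≤ ⟪c • v, ξ⟫
      rw [real_inner_smul_left]
      positivity
  calc 2 * μH[δ] (sphere 0 r ∩ {ξ | a ≤ ⟪v, ξ⟫})
      ≤ 2 * μH[δ] (centralProj r (c • v) '' H) := by
        gcongr; exact sphere_inter_cap_subset_image_centralProj hv hr ha hc hcap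
    _ ≤ 2 * (ENNReal.ofReal (r / ρ) ^ δ * μH[δ] H) := by
        gcongr; exact hlip.hausdorffMeasure_image_le hδ
    _ = ENNReal.ofReal ((r / ρ) ^ δ) * (2 * μH[δ] H) := by
        rw [ENNReal.ofReal_rpow_of_nonneg (by positivity) hδ]; ring
    _ ≤ ENNReal.ofReal ((r / ρ) ^ δ) * μH[δ] (sphere (0 : E) r) := by
        gcongr; exact two_mul_hausdorffMeasure_hemisphere_le δ v r

theorem hausdorffMeasure_sphere_inter_cap_le [MeasurableSpace E] [BorelSpace E] {d : ℝ}
    (hd : 1 ≤ d) {v : E} (hv : ‖v‖ = 1) {r a : ℝ} (hr : 0 < r) (ha : 0 < a) :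
    μH[d - 1] (sphere 0 r ∩ {ξ | a ≤ ⟪v, ξ⟫}) ≤
      ENNReal.ofReal (exp (-(d * a ^ 2) / (2 * r ^ 2))) * μH[d - 1] (sphere (0 : E) r) := by
  rcases lt_or_ge r a with har | har
  · have hempty : sphere (0 : E) r ∩ {ξ | a ≤ ⟪v, ξ⟫} = ∅ := by
      refine Set.eq_empty_of_forall_notMem fun ξ ⟨hξ, haξ⟩ => ?_
      have := real_inner_le_norm v ξ
      rw [hv, mem_sphere_zero_iff_norm.1 hξ, one_mul] at this
      exact (har.trans_le (haξ.trans this)).false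
    simp [hempty]
  obtain ⟨t, ht0, hlt, hexp⟩ := exists_exp_neg_le_two_mul_exp_neg hd
    (by positivity : 0 < (a / r) ^ 2) (pow_le_one₀ (by positivity) ((div_le_one hr).2 har))
  have harg : -(d * (a / r) ^ 2) / 2 = -(d * a ^ 2) / (2 * r ^ 2) := by field_simp
  rw [harg] at hexp
  -- with `r ^ 2 + c ^ 2 = (r * exp t) ^ 2` the projection from `-c • v` is `exp (-t)`-Lipschitz
  set c := r * √(exp (2 * t) - 1)
  have hc2 : c ^ 2 = r ^ 2 * (exp (2 * t) - 1) := by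
    rw [mul_pow, sq_sqrt (by linarith [one_le_exp (by linarith : 0 ≤ 2 * t)])]
  have hρc : (r * exp t) ^ 2 ≤ r ^ 2 + c ^ 2 := by
    rw [hc2, mul_pow, ← exp_nat_mul]
    norm_num
    linarith
  have hcap : c ^ 2 * (r ^ 2 - a ^ 2) < r ^ 2 * a ^ 2 := by
    have ha2 : a ^ 2 = (a / r) ^ 2 * r ^ 2 := by field_simp
    rw [hc2, ha2]
    nlinarith [mul_lt_mul_of_pos_left hlt (pow_pos hr 4)]
  have hK : r / (r * exp t) = exp (-t) := by rw [exp_neg]; field_simp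
  have h2 := two_mul_hausdorffMeasure_sphere_inter_cap_le (δ := d - 1) (by linarith) hv hr ha
    (by positivity) (by positivity) hρc hcap
  rw [hK, ← exp_mul, neg_mul] at h2
  refine (ENNReal.mul_le_mul_iff_right two_ne_zero ofNat_ne_top).1 (h2.trans ?_)
  calc ENNReal.ofReal (exp (-(t * (d - 1)))) * μH[d - 1] (sphere (0 : E) r)
      ≤ ENNReal.ofReal (2 * exp (-(d * a ^ 2) / (2 * r ^ 2))) * μH[d - 1] (sphere (0 : E) r) := by
        gcongr
    _ = _ := by rw [ENNReal.ofReal_mul zero_le_two, ENNReal.ofReal_ofNat, mul_assoc]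

end

theorem uniformSphereMeasure_le_of_le_mul {d : ℕ} {x : EuclideanSpace ℝ (Fin d)} {r : ℝ}
    {s : Set (EuclideanSpace ℝ (Fin d))} {c : ℝ≥0∞}
    (h : μH[(d : ℝ) - 1] (s ∩ sphere x r) ≤ c * μH[(d : ℝ) - 1] (sphere x r)) :
    uniformSphereMeasure d x r s ≤ c := by
  rw [uniformSphereMeasure, Measure.smul_apply, smul_eq_mul,
    Measure.restrict_apply' isClosed_sphere.measurableSet, mul_comm, ← div_eq_mul_inv]
  exact ENNReal.div_le_of_le_mul h

/-- If `C` is an intersection of `m` closed half-spaces with unit normals, `x` is an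
interior point of `C` with `a = min_i |⟪v i, x⟫ + b i| > 0`, and `ξ` is uniform on the
centered sphere of radius `r > 0`, then
`P[x + ξ ∉ C] ≤ m exp (-d a^2 / (2 r^2))`. -/
theorem prob_escape_convex_cell_le (d m : ℕ)
    (v : Fin m → EuclideanSpace ℝ (Fin d)) (hv : ∀ i, ‖v i‖ = 1) (b : Fin m → ℝ)
    (C : Set (EuclideanSpace ℝ (Fin d)))
    (hC : C = {z | ∀ i, ⟪v i, z⟫ + b i ≤ 0})
    (x : EuclideanSpace ℝ (Fin d)) (hx : x ∈ interior C)
    (a : ℝ) (ha : IsLeast (Set.range fun i => |⟪v i, x⟫ + b i|) a) (ha0 : 0 < a)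
    (r : ℝ) (hr : 0 < r) :
    uniformSphereMeasure d 0 r {ξ | x + ξ ∉ C} ≤
      (m : ℝ≥0∞) * ENNReal.ofReal (Real.exp (-((d : ℝ) * a ^ 2) / (2 * r ^ 2))) := by
  subst hC
  set S := sphere (0 : EuclideanSpace ℝ (Fin d)) r
  set K := ENNReal.ofReal (Real.exp (-((d : ℝ) * a ^ 2) / (2 * r ^ 2)))
  have hcap (i : Fin m) : μH[(d : ℝ) - 1] (S ∩ {ξ | a ≤ ⟪v i, ξ⟫}) ≤ K * μH[(d : ℝ) - 1] S := by
    rcases Nat.eq_zero_or_pos d with rfl | hd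
    · simp [S, sphere_eq_empty_of_subsingleton hr.ne']
    · exact hausdorffMeasure_sphere_inter_cap_le (Nat.one_le_cast.2 hd) (hv i) hr ha0
  have hescape := setOf_add_notMem_subset_iUnion (interior_subset hx) fun i => ha.2 ⟨i, rfl⟩
  apply uniformSphereMeasure_le_of_le_mul
  calc μH[(d : ℝ) - 1] ({ξ | x + ξ ∉ {z | ∀ i, ⟪v i, z⟫ + b i ≤ 0}} ∩ S)
      ≤ μH[(d : ℝ) - 1] (⋃ i, S ∩ {ξ | a ≤ ⟪v i, ξ⟫}) := by
        rw [← Set.inter_iUnion, Set.inter_comm]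
        exact measure_mono (Set.inter_subset_inter_right _ hescape)
    _ ≤ ∑ i, μH[(d : ℝ) - 1] (S ∩ {ξ | a ≤ ⟪v i, ξ⟫}) := measure_iUnion_fintype_le _ _
    _ ≤ ∑ _i : Fin m, K * μH[(d : ℝ) - 1] S := Finset.sum_le_sum fun i _ => hcap i
    _ = m * K * μH[(d : ℝ) - 1] S := by
        rw [Finset.sum_const, Finset.card_univ, Fintype.card_fin, nsmul_eq_mul, mul_assoc]
end

section
/- Let f_N : ℝ^d → {0,1} be the input-output function of a network with L - 1 ReLU hidden layers (total of n_hidden hidden units) and one Heaviside output unit. Then there is a partition of ℝ^d into convex sets, each of which is an intersection of at most n := n_hidden + 1 half-spaces, such that f_N is constant on each set of the partition. -/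
open RealInnerProductSpace

/-- The Heaviside function: `θ t = 1` for `t > 0` and `θ t = 0` for `t ≤ 0`. -/
noncomputable def heaviside (t : ℝ) : ℝ := if 0 < t then 1 else 0

/-- Outputs of the successive layers of a ReLU network on input `x ∈ ℝ^d`.
`n l` is the number of units of layer `l` (with `n 0 = d` for the input layer),
`v l k j` is the weight of unit `k` of layer `l` on coordinate `j` of the previous
layer, and `b l k` its bias. -/
noncomputable def reluLayerOutputs (d : ℕ) (n : ℕ → ℕ) (v : ℕ → ℕ → ℕ → ℝ)
    (b : ℕ → ℕ → ℝ) : ℕ → EuclideanSpace ℝ (Fin d) → ℕ → ℝ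
  | 0, x, k => if h : k < d then x ⟨k, h⟩ else 0
  | l + 1, x, k =>
      max ((∑ j ∈ Finset.range (n l), v (l + 1) k j * reluLayerOutputs d n v b l x j)
        + b (l + 1) k) 0

/-- A half-space of `ℝ^d` (closed negative or open positive). -/
def IsHalfspace {d : ℕ} (S : Set (EuclideanSpace ℝ (Fin d))) : Prop :=
  ∃ (w : EuclideanSpace ℝ (Fin d)) (c : ℝ),
    S = {z | ⟪w, z⟫ + c ≤ 0} ∨ S = {z | 0 < ⟪w, z⟫ + c}

/-! On the inputs sharing one activation pattern (which hidden units are active, and the sign of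
the output preactivation) every ReLU acts as the identity or as zero, so every preactivation
coincides there with the affine map obtained by freezing each unit in that state. Conversely,
layer by layer, the signs of these frozen affine maps force the activation pattern. Hence each
pattern class is the intersection of one half-space per hidden unit and one for the output unit,
and the Heaviside output is constant on it. -/

lemma AffineMap.exists_eq_inner_add {F : Type*} [NormedAddCommGroup F] [InnerProductSpace ℝ F]
    [FiniteDimensional ℝ F] (φ : F →ᵃ[ℝ] ℝ) : ∃ w : F, ∀ y, φ y = ⟪w, y⟫ + φ 0 := by
  refine ⟨(InnerProductSpace.toDual ℝ F).symm (LinearMap.toContinuousLinearMap φ.linear),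
    fun y => ?_⟩
  rw [InnerProductSpace.toDual_symm_apply, LinearMap.coe_toContinuousLinearMap', φ.decomp]
  simp

lemma AffineMap.finset_sum_apply {ι k V P W : Type*} [Ring k] [AddCommGroup V] [Module k V]
    [AddTorsor V P] [AddCommGroup W] [Module k W] (s : Finset ι) (f : ι → P →ᵃ[k] W) (p : P) :
    (∑ i ∈ s, f i) p = ∑ i ∈ s, f i p :=
  map_sum (AddMonoidHom.mk' (fun φ : P →ᵃ[k] W => φ p) fun _ _ => rfl) f s

lemma isHalfspace_setOf_pos_iff {d : ℕ} (φ : EuclideanSpace ℝ (Fin d) →ᵃ[ℝ] ℝ)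
    (x₀ : EuclideanSpace ℝ (Fin d)) : IsHalfspace {y | 0 < φ y ↔ 0 < φ x₀} := by
  obtain ⟨w, hw⟩ := φ.exists_eq_inner_add
  refine ⟨w, φ 0, ?_⟩
  by_cases h : 0 < φ x₀
  · right; ext y; rw [Set.mem_ofPred_eq, Set.mem_ofPred_eq, hw, iff_true_right h]
  · left; ext y; rw [Set.mem_ofPred_eq, Set.mem_ofPred_eq, hw, iff_false_right h, not_lt]

lemma IsHalfspace.convex {d : ℕ} {S : Set (EuclideanSpace ℝ (Fin d))} (hS : IsHalfspace S) :
    Convex ℝ S := by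
  obtain ⟨w, c, rfl | rfl⟩ := hS
  · exact (convex_Iic 0).affine_preimage ((innerₛₗ ℝ w).toAffineMap + AffineMap.const ℝ _ c)
  · exact (convex_Ioi 0).affine_preimage ((innerₛₗ ℝ w).toAffineMap + AffineMap.const ℝ _ c)

lemma heaviside_congr {s t : ℝ} (h : 0 < s ↔ 0 < t) : heaviside s = heaviside t := by
  simp only [heaviside, h]

namespace ReluNet

variable {d : ℕ} (n : ℕ → ℕ) (v : ℕ → ℕ → ℕ → ℝ) (b : ℕ → ℕ → ℝ)

noncomputable def readout (l : ℕ) (w : ℕ → ℝ) (c : ℝ) (x : EuclideanSpace ℝ (Fin d)) : ℝ :=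
  (∑ j ∈ Finset.range (n l), w j * reluLayerOutputs d n v b l x j) + c

noncomputable def hiddenPreact (l k : ℕ) (x : EuclideanSpace ℝ (Fin d)) : ℝ :=
  readout n v b l (v (l + 1) k) (b (l + 1) k) x

def SamePatternBelow (l₀ : ℕ) (x y : EuclideanSpace ℝ (Fin d)) : Prop :=
  ∀ l < l₀, ∀ k < n (l + 1), (0 < hiddenPreact n v b l k y ↔ 0 < hiddenPreact n v b l k x)

/-- The network with every ReLU unit frozen in the state, active or not, that it has at `x₀`. -/
noncomputable def frozenOutputs (x₀ : EuclideanSpace ℝ (Fin d)) :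
    ℕ → ℕ → EuclideanSpace ℝ (Fin d) →ᵃ[ℝ] ℝ
  | 0, k => if h : k < d then (EuclideanSpace.projₗ (⟨k, h⟩ : Fin d)).toAffineMap else 0
  | l + 1, k =>
      if 0 < hiddenPreact n v b l k x₀ then
        (∑ j ∈ Finset.range (n l), v (l + 1) k j • frozenOutputs x₀ l j) +
          AffineMap.const ℝ _ (b (l + 1) k)
      else 0

noncomputable def frozenReadout (x₀ : EuclideanSpace ℝ (Fin d)) (l : ℕ) (w : ℕ → ℝ) (c : ℝ) :
    EuclideanSpace ℝ (Fin d) →ᵃ[ℝ] ℝ :=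
  (∑ j ∈ Finset.range (n l), w j • frozenOutputs n v b x₀ l j) + AffineMap.const ℝ _ c

variable {n v b}

lemma reluLayerOutputs_succ (l k : ℕ) (x : EuclideanSpace ℝ (Fin d)) :
    reluLayerOutputs d n v b (l + 1) x k = max (hiddenPreact n v b l k x) 0 :=
  rfl

lemma frozenOutputs_succ (x₀ : EuclideanSpace ℝ (Fin d)) (l k : ℕ) :
    frozenOutputs n v b x₀ (l + 1) k =
      if 0 < hiddenPreact n v b l k x₀ then frozenReadout n v b x₀ l (v (l + 1) k) (b (l + 1) k)
      else 0 :=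
  rfl

lemma frozenReadout_apply (x₀ y : EuclideanSpace ℝ (Fin d)) (l : ℕ) (w : ℕ → ℝ) (c : ℝ) :
    frozenReadout n v b x₀ l w c y =
      (∑ j ∈ Finset.range (n l), w j * frozenOutputs n v b x₀ l j y) + c := by
  simp only [frozenReadout, AffineMap.coe_add, Pi.add_apply, AffineMap.finset_sum_apply,
    AffineMap.coe_smul, Pi.smul_apply, smul_eq_mul, AffineMap.const_apply]

lemma SamePatternBelow.refl (l₀ : ℕ) (x : EuclideanSpace ℝ (Fin d)) :
    SamePatternBelow n v b l₀ x x :=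
  fun _ _ _ _ => Iff.rfl

lemma SamePatternBelow.mono {l₀ l₁ : ℕ} {x y : EuclideanSpace ℝ (Fin d)}
    (h : SamePatternBelow n v b l₁ x y) (hl : l₀ ≤ l₁) : SamePatternBelow n v b l₀ x y :=
  fun l hl₀ => h l (hl₀.trans_le hl)

lemma readout_eq_frozenReadout_of_outputs {x₀ y : EuclideanSpace ℝ (Fin d)} {l : ℕ}
    (h : ∀ j < n l, reluLayerOutputs d n v b l y j = frozenOutputs n v b x₀ l j y)
    (w : ℕ → ℝ) (c : ℝ) : readout n v b l w c y = frozenReadout n v b x₀ l w c y := by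
  rw [frozenReadout_apply, readout]
  congr 1
  exact Finset.sum_congr rfl fun j hj => by rw [h j (Finset.mem_range.mp hj)]

lemma reluLayerOutputs_eq_frozenOutputs {x₀ y : EuclideanSpace ℝ (Fin d)} {l₀ : ℕ}
    (h : SamePatternBelow n v b l₀ x₀ y) :
    ∀ k < n l₀, reluLayerOutputs d n v b l₀ y k = frozenOutputs n v b x₀ l₀ k y := by
  induction l₀ with
  | zero =>
    intro k _
    by_cases hk : k < d <;> simp [reluLayerOutputs, frozenOutputs, hk]
  | succ l ih =>
    intro k hk
    have hpre :
        hiddenPreact n v b l k y = frozenReadout n v b x₀ l (v (l + 1) k) (b (l + 1) k) y :=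
      readout_eq_frozenReadout_of_outputs (ih (h.mono l.le_succ)) _ _
    have hsign := h l l.lt_succ_self k hk
    rw [reluLayerOutputs_succ, frozenOutputs_succ]
    split_ifs with hx
    · rw [← hpre, max_eq_left (hsign.mpr hx).le]
    · rw [max_eq_right (not_lt.mp (mt hsign.mp hx))]
      rfl

lemma readout_eq_frozenReadout {x₀ y : EuclideanSpace ℝ (Fin d)} {l : ℕ}
    (h : SamePatternBelow n v b l x₀ y) (w : ℕ → ℝ) (c : ℝ) :
    readout n v b l w c y = frozenReadout n v b x₀ l w c y :=
  readout_eq_frozenReadout_of_outputs (reluLayerOutputs_eq_frozenOutputs h) w c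

lemma samePatternBelow_of_frozen {x₀ y : EuclideanSpace ℝ (Fin d)} {l₀ : ℕ}
    (h : ∀ l < l₀, ∀ k < n (l + 1),
      (0 < frozenReadout n v b x₀ l (v (l + 1) k) (b (l + 1) k) y ↔
        0 < frozenReadout n v b x₀ l (v (l + 1) k) (b (l + 1) k) x₀)) :
    SamePatternBelow n v b l₀ x₀ y := by
  induction l₀ with
  | zero => exact fun l hl => absurd hl l.not_lt_zero
  | succ l₀ ih =>
    have hbelow := ih fun l hl => h l (hl.trans l₀.lt_succ_self)
    intro l hl k hk
    rcases Nat.lt_succ_iff_lt_or_eq.mp hl with hl | rfl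
    · exact hbelow l hl k hk
    · rw [hiddenPreact, hiddenPreact, readout_eq_frozenReadout hbelow,
        readout_eq_frozenReadout (SamePatternBelow.refl _ _)]
      exact h l l.lt_succ_self k hk

variable (n v b)

/-- `none` is the output unit and `some ⟨l, k⟩` is unit `k` of hidden layer `l + 1`. -/
abbrev Neuron (M : ℕ) : Type := Option (Σ l : Fin M, Fin (n (l + 1)))

variable (M : ℕ) (vout : ℕ → ℝ) (bout : ℝ)

noncomputable def preactivation : Neuron n M → EuclideanSpace ℝ (Fin d) → ℝ
  | none => readout n v b M vout bout
  | some ⟨l, k⟩ => hiddenPreact n v b l k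

noncomputable def frozenPreactivation (x₀ : EuclideanSpace ℝ (Fin d)) :
    Neuron n M → EuclideanSpace ℝ (Fin d) →ᵃ[ℝ] ℝ
  | none => frozenReadout n v b x₀ M vout bout
  | some ⟨l, k⟩ => frozenReadout n v b x₀ l (v (l + 1) k) (b (l + 1) k)

def activationPattern (x : EuclideanSpace ℝ (Fin d)) (u : Neuron n M) : Prop :=
  0 < preactivation n v b M vout bout u x

lemma card_neuron : Fintype.card (Neuron n M) = (∑ l ∈ Finset.range M, n (l + 1)) + 1 := by
  simp [Fintype.card_sigma, Fin.sum_univ_eq_sum_range (fun l => n (l + 1))]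

variable {n v b M vout bout}

lemma preactivation_eq_frozenPreactivation {x₀ y : EuclideanSpace ℝ (Fin d)}
    (h : SamePatternBelow n v b M x₀ y) :
    ∀ u, preactivation n v b M vout bout u y = frozenPreactivation n v b M vout bout x₀ u y
  | none => readout_eq_frozenReadout h _ _
  | some ⟨l, _⟩ => readout_eq_frozenReadout (h.mono l.isLt.le) _ _

lemma setOf_activationPattern_eq (x₀ : EuclideanSpace ℝ (Fin d)) :
    {y | activationPattern n v b M vout bout y = activationPattern n v b M vout bout x₀} =
      ⋂ u, {y | 0 < frozenPreactivation n v b M vout bout x₀ u y ↔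
        0 < frozenPreactivation n v b M vout bout x₀ u x₀} := by
  ext y
  simp only [Set.mem_ofPred_eq, Set.mem_iInter, funext_iff, eq_iff_iff, activationPattern]
  have hself : ∀ u, preactivation n v b M vout bout u x₀ =
      frozenPreactivation n v b M vout bout x₀ u x₀ :=
    preactivation_eq_frozenPreactivation (SamePatternBelow.refl M x₀)
  constructor
  · intro h
    have hy : SamePatternBelow n v b M x₀ y := fun l hl k hk => h (some ⟨⟨l, hl⟩, ⟨k, hk⟩⟩)
    intro u
    rw [← preactivation_eq_frozenPreactivation hy, ← hself]
    exact h u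
  · intro h
    have hy : SamePatternBelow n v b M x₀ y :=
      samePatternBelow_of_frozen fun l hl k hk => h (some ⟨⟨l, hl⟩, ⟨k, hk⟩⟩)
    intro u
    rw [preactivation_eq_frozenPreactivation hy, hself]
    exact h u

end ReluNet

theorem relu_heaviside_network_piecewise_constant_general (d L : ℕ)
    (n : ℕ → ℕ) (v : ℕ → ℕ → ℕ → ℝ) (b : ℕ → ℕ → ℝ)
    (vout : ℕ → ℝ) (bout : ℝ) (nHidden : ℕ)
    (hnHidden : nHidden = ∑ l ∈ Finset.Ico 1 L, n l)
    (f : EuclideanSpace ℝ (Fin d) → ℝ)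
    (hf : ∀ x, f x = heaviside
      ((∑ j ∈ Finset.range (n (L - 1)), vout j * reluLayerOutputs d n v b (L - 1) x j)
        + bout)) :
    ∃ P : Set (Set (EuclideanSpace ℝ (Fin d))),
      (∀ D ∈ P, Convex ℝ D) ∧
      ⋃₀ P = Set.univ ∧
      (P.Pairwise fun D D' => Disjoint D D') ∧
      (∀ D ∈ P, ∃ c : ℝ, ∀ z ∈ D, f z = c) ∧
      (∀ D ∈ P, ∃ m : ℕ, m ≤ nHidden + 1 ∧
        ∃ S : Fin m → Set (EuclideanSpace ℝ (Fin d)),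
          (∀ i, IsHalfspace (S i)) ∧ D = ⋂ i, S i) := by
  set r := Setoid.ker (ReluNet.activationPattern (d := d) n v b (L - 1) vout bout)
  set S := ReluNet.frozenPreactivation (d := d) n v b (L - 1) vout bout
  have hcells : ∀ D ∈ r.classes, ∃ x₀, D = ⋂ u, {y | 0 < S x₀ u y ↔ 0 < S x₀ u x₀} := by
    rintro D ⟨x₀, rfl⟩
    exact ⟨x₀, ReluNet.setOf_activationPattern_eq x₀⟩
  have hcard : Fintype.card (ReluNet.Neuron n (L - 1)) = nHidden + 1 := by
    rw [ReluNet.card_neuron, hnHidden, Finset.sum_Ico_eq_sum_range]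
    simp only [add_comm 1]
  refine ⟨r.classes, ?_, (Setoid.isPartition_classes r).sUnion_eq_univ,
    (Setoid.isPartition_classes r).pairwiseDisjoint, ?_, ?_⟩
  · intro D hD
    obtain ⟨x₀, rfl⟩ := hcells D hD
    exact convex_iInter fun u => (isHalfspace_setOf_pos_iff _ x₀).convex
  · rintro D ⟨x₀, rfl⟩
    refine ⟨f x₀, fun z hz => ?_⟩
    rw [hf, hf]
    exact heaviside_congr (Iff.of_eq (congr_fun hz none))
  · intro D hD
    obtain ⟨x₀, rfl⟩ := hcells D hD
    let e := Fintype.equivFin (ReluNet.Neuron n (L - 1))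
    exact ⟨_, hcard.le, fun i => {y | 0 < S x₀ (e.symm i) y ↔ 0 < S x₀ (e.symm i) x₀},
      fun i => isHalfspace_setOf_pos_iff _ x₀, (e.symm.surjective.iInter_comp _).symm⟩

/-- The input-output function of a network with `L - 1` ReLU hidden layers (with
`nHidden` hidden units in total) and a single Heaviside output unit is piecewise
constant: there is a partition of `ℝ^d` into convex sets, each an intersection of at
most `nHidden + 1` half-spaces, on each of which the function is constant. -/
theorem relu_heaviside_network_piecewise_constant (d L : ℕ) (hL : 1 ≤ L)
    (n : ℕ → ℕ) (hn0 : n 0 = d) (v : ℕ → ℕ → ℕ → ℝ) (b : ℕ → ℕ → ℝ)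
    (vout : ℕ → ℝ) (bout : ℝ) (nHidden : ℕ)
    (hnHidden : nHidden = ∑ l ∈ Finset.Ico 1 L, n l)
    (f : EuclideanSpace ℝ (Fin d) → ℝ)
    (hf : ∀ x, f x = heaviside
      ((∑ j ∈ Finset.range (n (L - 1)), vout j * reluLayerOutputs d n v b (L - 1) x j)
        + bout)) :
    ∃ P : Set (Set (EuclideanSpace ℝ (Fin d))),
      (∀ D ∈ P, Convex ℝ D) ∧
      ⋃₀ P = Set.univ ∧
      (P.Pairwise fun D D' => Disjoint D D') ∧
      (∀ D ∈ P, ∃ c : ℝ, ∀ z ∈ D, f z = c) ∧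
      (∀ D ∈ P, ∃ m : ℕ, m ≤ nHidden + 1 ∧
        ∃ S : Fin m → Set (EuclideanSpace ℝ (Fin d)),
          (∀ i, IsHalfspace (S i)) ∧ D = ⋂ i, S i) :=
  relu_heaviside_network_piecewise_constant_general d L n v b vout bout nHidden hnHidden f hf
end

section
/- For a deep ReLU network with a Heaviside output and total unit count n, and any input x whose distance from the face-set H (the union of region boundaries) exceeds the perturbation radius r, every perturbed input x + ξ with ‖ξ‖ ≤ r satisfies f_N(x + ξ) = f_N(x); i.e., no adversarial example exists within the closed ball of radius r around x. -/
/-!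
The closed ball of radius `r` about `x` is connected and misses `H`, hence misses the frontier of
the region `D` containing `x`; a connected set meeting `D` but not its frontier lies inside `D`.
So the whole ball lies in one region, on which the network is constant.
-/

open Metric Set

theorem IsPreconnected.subset_of_disjoint_frontier {X : Type*} [TopologicalSpace X] {s t : Set X}
    (hs : IsPreconnected s) (hst : (s ∩ t).Nonempty) (hfr : Disjoint s (frontier t)) :
    s ⊆ t := by
  have hint : closure t ∩ s ⊆ interior t := fun z ⟨hzc, hzs⟩ => by
    by_contra hzi
    exact hfr.ne_of_mem hzs ⟨hzc, hzi⟩ rfl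
  obtain ⟨z, hzs, hzt⟩ := hst
  refine (hs.subset_of_closure_inter_subset isOpen_interior
    ⟨z, hzs, hint ⟨subset_closure hzt, hzs⟩⟩ ?_).trans interior_subset
  exact (inter_subset_inter_left _ (closure_mono interior_subset)).trans hint

theorem no_adversarial_in_ball_general (d : ℕ) (f : EuclideanSpace ℝ (Fin d) → ℝ)
    (P : Set (Set (EuclideanSpace ℝ (Fin d))))
    (hcover : ⋃₀ P = Set.univ)
    (hconst : ∀ D ∈ P, ∀ x ∈ D, ∀ y ∈ D, f x = f y)
    (H : Set (EuclideanSpace ℝ (Fin d)))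
    (hbd : ∀ D ∈ P, frontier D ⊆ H)
    (x : EuclideanSpace ℝ (Fin d)) (r : ℝ)
    (hdist : r < infDist x H) :
    ∀ ξ : EuclideanSpace ℝ (Fin d), ‖ξ‖ ≤ r → f (x + ξ) = f x := by
  intro ξ hξ
  obtain ⟨D, hD, hxD⟩ := mem_sUnion.1 (hcover ▸ mem_univ x)
  have hball : closedBall x r ⊆ D :=
    isPreconnected_closedBall.subset_of_disjoint_frontier
      ⟨x, mem_closedBall_self ((norm_nonneg ξ).trans hξ), hxD⟩
      ((disjoint_closedBall_of_lt_infDist hdist).mono_right (hbd D hD))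
  exact hconst D hD _ (hball (add_mem_closedBall_iff_norm.2 hξ)) x hxD

/-- No adversarial examples far from the face set: if `ℝ^d` partitions into convex sets
on each of which the network's I/O function `f` is constant, with all region boundaries
contained in a set `H`, then for any input `x` whose distance from `H` exceeds the
perturbation radius `r ≥ 0`, every perturbation `ξ` with `‖ξ‖ ≤ r` leaves the output
unchanged: `f (x + ξ) = f x`. -/
theorem no_adversarial_in_ball (d : ℕ) (f : EuclideanSpace ℝ (Fin d) → ℝ)
    (P : Set (Set (EuclideanSpace ℝ (Fin d))))
    (hcover : ⋃₀ P = Set.univ)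
    (hconv : ∀ D ∈ P, Convex ℝ D)
    (hconst : ∀ D ∈ P, ∀ x ∈ D, ∀ y ∈ D, f x = f y)
    (H : Set (EuclideanSpace ℝ (Fin d)))
    (hbd : ∀ D ∈ P, frontier D ⊆ H)
    (x : EuclideanSpace ℝ (Fin d)) (r : ℝ) (hr : 0 ≤ r)
    (hdist : r < infDist x H) :
    ∀ ξ : EuclideanSpace ℝ (Fin d), ‖ξ‖ ≤ r → f (x + ξ) = f x :=
  no_adversarial_in_ball_general d f P hcover hconst H hbd x r hdist
end
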